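/- For every natural number k, the poset of 312-avoiding real TITOs under the Dyer order has a maximal chain with exactly k + 1 elements if and only if the poset of 312-avoiding TITOs under the Dyer order has a maximal chain with exactly k + 2 elements. -/

import Mathlib

structure TITO (n : ℕ) where
  rel : ℤ → ℤ → Prop
  refl : ∀ a, rel a a
  antisymm : ∀ a b, rel a b → rel b a → a = b
  trans : ∀ a b c, rel a b → rel b c → rel a c
  total : ∀ a b, rel a b ∨ rel b a
  invariant : ∀ a b, rel a b ↔ rel (a + n) (b + n)

namespace TITO

variable {n : ℕ}

/-- The inversion set of a TITO. -/
def Inversions (t : TITO n) : Set (ℤ × ℤ) := {p | p.1 < p.2 ∧ t.rel p.2 p.1}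

/-- A TITO is 312-avoiding if there are no integers `a < b < c` with `c ≼ a` and `a ≼ b`. -/
def Avoids312 (t : TITO n) : Prop :=
  ¬ ∃ a b c : ℤ, a < b ∧ b < c ∧ t.rel c a ∧ t.rel a b

/-- A TITO is 132-avoiding if there are no integers `a < b < c` with `a ≼ c` and `c ≼ b`. -/
def Avoids132 (t : TITO n) : Prop :=
  ¬ ∃ a b c : ℤ, a < b ∧ b < c ∧ t.rel a c ∧ t.rel c b

/-- A set is order-convex for a TITO. -/
def OrderConvex (t : TITO n) (S : Set ℤ) : Prop :=
  ∀ x ∈ S, ∀ z ∈ S, ∀ y : ℤ, t.rel x y → t.rel y z → y ∈ S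

/-- A block of a TITO: an order-convex set with no minimal and no maximal element in which
all intervals are finite. -/
def IsBlock (t : TITO n) (I : Set ℤ) : Prop :=
  t.OrderConvex I ∧
  (∀ a ∈ I, ∃ b ∈ I, b ≠ a ∧ t.rel b a) ∧
  (∀ a ∈ I, ∃ b ∈ I, b ≠ a ∧ t.rel a b) ∧
  (∀ a ∈ I, ∀ c ∈ I, t.rel a c → {b : ℤ | t.rel a b ∧ t.rel b c}.Finite)

/-- A block is waxing if `a ≼ a + n` for every `a` in it. -/
def Waxing (t : TITO n) (I : Set ℤ) : Prop := ∀ a ∈ I, t.rel a (a + n)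

/-- A block is waning if `a + n ≼ a` for every `a` in it. -/
def Waning (t : TITO n) (I : Set ℤ) : Prop := ∀ a ∈ I, t.rel (a + n) a

/-- A TITO is real if `a ≼ a + n` whenever the residue class of `a` mod `n` is order-convex. -/
def IsReal (t : TITO n) : Prop :=
  ∀ a : ℤ, t.OrderConvex {x : ℤ | ∃ k : ℤ, x = a + k * n} → t.rel a (a + n)

/-- A TITO is co-real if `a + n ≼ a` whenever the residue class of `a` mod `n` is order-convex. -/
def IsCoReal (t : TITO n) : Prop :=
  ∀ a : ℤ, t.OrderConvex {x : ℤ | ∃ k : ℤ, x = a + k * n} → t.rel (a + n) a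

/-- `(a, b)` with `a < b` is a lower wall if `b ≼ a` is a cover relation of the total order. -/
def LowerWall (t : TITO n) (a b : ℤ) : Prop :=
  a < b ∧ t.rel b a ∧ ∀ z : ℤ, z ≠ a → z ≠ b → ¬ (t.rel b z ∧ t.rel z a)

end TITO

/-- A chain in the subposet `P` of TITOs ordered by the Dyer order. -/
def IsChainIn {n : ℕ} (P C : Set (TITO n)) : Prop :=
  C ⊆ P ∧ ∀ x ∈ C, ∀ y ∈ C, x.Inversions ⊆ y.Inversions ∨ y.Inversions ⊆ x.Inversions

/-- A maximal chain in the subposet `P` of TITOs ordered by the Dyer order. -/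
def IsMaxChainIn {n : ℕ} (P C : Set (TITO n)) : Prop :=
  IsChainIn P C ∧ ∀ C' : Set (TITO n), IsChainIn P C' → C ⊆ C' → C = C'

/-!
A 312-avoiding TITO is determined by its reach `a ↦ sup {b - a | a < b, b ≼ a}`, a periodic
function `ℤ → ℕ∞` whose finite values are at most `n - 1`, and the Dyer order becomes the
pointwise order of reaches. Such a TITO fails to be real exactly when its reach is infinite on
precisely one residue class; cutting that class down to `n - 1` (`realify`) gives the largest
real TITO below it.

In a finite maximal chain the elements of finite reach come first; let `u` be the last of them
and `v` the first element of infinite reach. In a maximal chain of all 312-avoiding TITOs, `v` is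
non-real and `realify v = u`, and `realify` maps the chain onto a maximal chain of real TITOs
with exactly one element fewer. Conversely, a maximal chain of real TITOs becomes maximal among
all 312-avoiding ones after inserting a single non-real TITO between `u` and `v`: `u` with one
residue class raised to `⊤`.
-/

theorem Int.exists_modEq_mem_Ioo {n a b : ℤ} (hn : 0 < n) (hab : ¬ a ≡ b [ZMOD n]) :
    ∃ x ∈ Set.Ioo a (a + n), x ≡ b [ZMOD n] := by
  have hpos : (b - a) % n ≠ 0 := fun h => hab (Int.modEq_iff_dvd.2 (Int.dvd_of_emod_eq_zero h))
  have hnonneg := Int.emod_nonneg (b - a) hn.ne'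
  have hlt := Int.emod_lt_of_pos (b - a) hn
  refine ⟨a + (b - a) % n, ⟨by omega, by omega⟩, Int.modEq_iff_dvd.2 ⟨(b - a) / n, ?_⟩⟩
  have := Int.emod_add_mul_ediv (b - a) n
  linarith

section Chains

variable {α : Type*} [PartialOrder α] {s : Set α}

theorem IsChain.exists_isGreatest_of_finite (hc : IsChain (· ≤ ·) s) (hs : s.Finite)
    (hne : s.Nonempty) : ∃ u, IsGreatest s u := by
  obtain ⟨u, hu⟩ := hs.exists_maximal hne
  refine ⟨u, hu.prop, fun x hx => ?_⟩
  rcases eq_or_ne x u with rfl | hxu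
  exacts [le_rfl, (hc hx hu.prop hxu).elim id (hu.le_of_ge hx)]

theorem IsChain.exists_isLeast_of_finite (hc : IsChain (· ≤ ·) s) (hs : s.Finite)
    (hne : s.Nonempty) : ∃ v, IsLeast s v := by
  obtain ⟨v, hv⟩ := hs.exists_minimal hne
  refine ⟨v, hv.prop, fun x hx => ?_⟩
  rcases eq_or_ne x v with rfl | hxv
  exacts [le_rfl, (hc hx hv.prop hxv).elim (hv.le_of_le hx) id]

end Chains

/-- Holds trivially when `b ≤ a`, as `toNat` truncates. -/
def Reaches (h : ℤ → ℕ∞) (a b : ℤ) : Prop := ((b - a).toNat : ℕ∞) ≤ h a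

/-- The functions `a ↦ sup {b - a | a < b, b ≼ a}` of the 312-avoiding TITOs. -/
structure IsReachFn (n : ℕ) (h : ℤ → ℕ∞) : Prop where
  periodic : Function.Periodic h n
  reaches_trans : ∀ a b c, a < b → b < c → Reaches h a b → Reaches h b c → Reaches h a c

namespace Reaches

variable {h : ℤ → ℕ∞} {a b c : ℤ}

theorem of_eq_top (ha : h a = ⊤) : Reaches h a b := by
  rw [Reaches, ha]
  exact le_top

theorem mono (hbc : b ≤ c) (hac : Reaches h a c) : Reaches h a b :=
  le_trans (Nat.cast_le.2 (by omega)) hac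

theorem iff_of_eq_coe {k : ℕ} (ha : h a = k) : Reaches h a b ↔ b - a ≤ k := by
  rw [Reaches, ha, Nat.cast_le]
  omega

end Reaches

namespace IsReachFn

variable {n : ℕ} {h : ℤ → ℕ∞} (hh : IsReachFn n h) {a b x y : ℤ}
include hh

theorem eq_of_modEq (hab : a ≡ b [ZMOD n]) : h a = h b := by
  obtain ⟨k, hk⟩ := Int.modEq_iff_dvd.1 hab
  rw [show b = a + k * n by linarith]
  exact (hh.periodic.int_mul k a).symm

theorem reaches_trans' (hbx : b < x) (hxy : x ≤ y) (hr : Reaches h b x) (hr' : Reaches h x y) :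
    Reaches h b y := by
  rcases hxy.eq_or_lt with rfl | hxy
  · exact hr
  · exact hh.reaches_trans b x y hbx hxy hr hr'

theorem eq_top_of_reaches (hab : a < b) (hr : Reaches h a b) (hb : h b = ⊤) : h a = ⊤ :=
  ENat.eq_top_iff_forall_ge.2 fun m =>
    le_trans (Nat.cast_le.2 (by omega))
      (hh.reaches_trans a b (b + m + 1) hab (by omega) hr (.of_eq_top hb))

theorem eq_top_of_le (hn : 1 ≤ n) (ha : (n : ℕ∞) ≤ h a) : h a = ⊤ := by
  have step : ∀ k : ℕ, Reaches h a (a + (k + 1) * n) := by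
    intro k
    induction k with
    | zero => exact le_trans (Nat.cast_le.2 (by omega)) ha
    | succ k ih =>
      have hper : h (a + (k + 1) * n) = h a := hh.periodic.int_mul (k + 1) a
      refine hh.reaches_trans _ _ _ (by nlinarith) (by push_cast; nlinarith) ih ?_
      refine le_trans (le_of_eq ?_) (hper ▸ ha)
      rw [show a + ((k + 1 : ℕ) + 1 : ℤ) * n - (a + (k + 1) * n) = (n : ℤ) by push_cast; ring]
      simp
  refine ENat.eq_top_iff_forall_ge.2 fun m => le_trans (Nat.cast_le.2 ?_) (step m)
  have : (m : ℤ) + 1 ≤ (m + 1) * n := by nlinarith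
  omega

theorem le_of_ne_top (hn : 1 ≤ n) (ha : h a ≠ ⊤) : h a ≤ (n - 1 : ℕ) := by
  by_contra hlt
  refine ha (hh.eq_top_of_le hn ?_)
  rw [not_le, ← ENat.add_one_le_iff (ENat.natCast_ne_top _)] at hlt
  exact le_trans (by norm_cast; omega) hlt

/-- A point of finite reach cannot reach a point of reach at least `n - 1`, since it would
then reach `n` steps ahead. -/
theorem not_reaches (hn : 1 ≤ n) (hx : ((n - 1 : ℕ) : ℕ∞) ≤ h x) (hb : h b ≠ ⊤)
    (hbx : b < x) :
    ¬ Reaches h b x := by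
  intro hr
  have hfar : Reaches h b (x + (n - 1 : ℕ)) :=
    hh.reaches_trans' hbx (by omega) hr (le_trans (Nat.cast_le.2 (by omega)) hx)
  have := le_trans hfar (hh.le_of_ne_top hn hb)
  rw [Nat.cast_le] at this
  omega

theorem ne_top_of_eq_pred (hn : 1 ≤ n) (ha : h a = (n - 1 : ℕ)) (hab : ¬ a ≡ b [ZMOD n]) :
    h b ≠ ⊤ := by
  intro hb
  obtain ⟨x, ⟨hax, hxa⟩, hxb⟩ := Int.exists_modEq_mem_Ioo (by omega) hab
  have hreach : Reaches h a x := (Reaches.iff_of_eq_coe ha).2 (by omega)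
  have := hh.eq_top_of_reaches hax hreach ((hh.eq_of_modEq hxb).trans hb)
  simp [ha] at this

end IsReachFn

def raise (n : ℕ) (r : ℤ) (h : ℤ → ℕ∞) (a : ℤ) : ℕ∞ :=
  if a ≡ r [ZMOD n] then ⊤ else h a

section raise

variable {n : ℕ} {r a : ℤ} {h : ℤ → ℕ∞}

@[simp]
theorem raise_of_modEq (ha : a ≡ r [ZMOD n]) : raise n r h a = ⊤ := if_pos ha

@[simp]
theorem raise_of_not_modEq (ha : ¬ a ≡ r [ZMOD n]) : raise n r h a = h a := if_neg ha

theorem raise_eq_top_iff (hfin : ∀ a, h a ≠ ⊤) :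
    raise n r h a = ⊤ ↔ a ≡ r [ZMOD n] := by
  by_cases ha : a ≡ r [ZMOD n] <;> simp [ha, hfin a]

theorem le_raise : h ≤ raise n r h := fun a => by
  by_cases ha : a ≡ r [ZMOD n] <;> simp [ha]

theorem IsReachFn.raise_of_not_reaches (hh : IsReachFn n h)
    (hno : ∀ b x, h b ≠ ⊤ → x ≡ r [ZMOD n] → b < x → ¬ Reaches h b x) :
    IsReachFn n (raise n r h) := by
  refine ⟨fun a => ?_, fun a b c hab hbc hr hr' => ?_⟩
  · have hshift : a + n ≡ r [ZMOD n] ↔ a ≡ r [ZMOD n] :=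
      ⟨(Int.add_modEq_right.symm).trans, Int.add_modEq_right.trans⟩
    by_cases ha : a ≡ r [ZMOD n]
    · simp [ha, hshift.2 ha]
    · simp [ha, mt hshift.1 ha, hh.periodic a]
  by_cases ha : a ≡ r [ZMOD n]
  · exact .of_eq_top (raise_of_modEq ha)
  unfold Reaches at hr hr' ⊢
  rw [raise_of_not_modEq ha] at hr ⊢
  by_cases hta : h a = ⊤
  · exact hta ▸ le_top
  by_cases hb : b ≡ r [ZMOD n]
  · exact absurd hr (hno a b hta hb hab)
  rw [raise_of_not_modEq hb] at hr'
  exact hh.reaches_trans a b c hab hbc hr hr'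

theorem IsReachFn.raise_of_le (hh : IsReachFn n h) (hn : 1 ≤ n)
    (hr : ((n - 1 : ℕ) : ℕ∞) ≤ h r) : IsReachFn n (raise n r h) :=
  hh.raise_of_not_reaches fun _ _ hb hx hbx => hh.not_reaches hn (hh.eq_of_modEq hx ▸ hr) hb hbx

/-- Raising the class of largest finite value among those where `g = ⊤` keeps `h` a reach
function: a point of finite value reaching that class would have a strictly larger value. -/
theorem IsReachFn.exists_raise {g : ℤ → ℕ∞} (hh : IsReachFn n h) (hg : IsReachFn n g)
    (hn : 1 ≤ n) (hle : h ≤ g) (hex : ∃ a, g a = ⊤ ∧ h a ≠ ⊤) :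
    ∃ r, g r = ⊤ ∧ IsReachFn n (raise n r h) := by
  set S : Set ℕ := {m | ∃ a, g a = ⊤ ∧ h a = m}
  have hS : ∀ b, g b = ⊤ → h b ≠ ⊤ → ∃ m ∈ S, h b = m := fun b hgb hhb =>
    ⟨(h b).toNat, ⟨b, hgb, (ENat.natCast_toNat hhb).symm⟩, (ENat.natCast_toNat hhb).symm⟩
  have hbdd : BddAbove S := ⟨n - 1, by
    rintro _ ⟨a, -, ha⟩
    exact_mod_cast ha ▸ hh.le_of_ne_top hn (ha ▸ ENat.natCast_ne_top _)⟩
  obtain ⟨a, hga, hha⟩ := hex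
  obtain ⟨m, hm, -⟩ := hS a hga hha
  obtain ⟨r, hgr, hhr⟩ : sSup S ∈ S := Nat.sSup_mem ⟨m, hm⟩ hbdd
  refine ⟨r, hgr, hh.raise_of_not_reaches fun b x hb hx hbx hr => ?_⟩
  have hgb : g b = ⊤ :=
    hg.eq_top_of_reaches hbx (le_trans hr (hle b)) ((hg.eq_of_modEq hx).trans hgr)
  obtain ⟨m, hmS, hbm⟩ := hS b hgb hb
  have hhx : h x = sSup S := (hh.eq_of_modEq hx).trans hhr
  have hfar := hh.reaches_trans' (y := x + sSup S) hbx (by omega) hr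
    ((Reaches.iff_of_eq_coe hhx).2 (by omega))
  have := le_csSup hbdd hmS
  rw [Reaches.iff_of_eq_coe hbm] at hfar
  omega

theorem IsReachFn.min_pred (hh : IsReachFn n h) (hn : 1 ≤ n)
    (hr : ∀ a, h a = ⊤ → a ≡ r [ZMOD n]) :
    IsReachFn n (fun a => min (h a) ((n - 1 : ℕ) : ℕ∞)) := by
  have hmin : ∀ {a}, h a ≠ ⊤ → min (h a) ((n - 1 : ℕ) : ℕ∞) = h a := fun ha =>
    min_eq_left (hh.le_of_ne_top hn ha)
  refine ⟨fun a => by simp only [hh.periodic a], fun a b c hab hbc hr₁ hr₂ => ?_⟩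
  by_cases hta : h a = ⊤
  · have hba : b < a + n := by
      simp only [Reaches, hta, min_eq_right le_top, Nat.cast_le] at hr₁
      omega
    have hb : h b ≠ ⊤ := by
      intro htb
      have hn' : (n : ℤ) ∣ b - a := Int.modEq_iff_dvd.1 ((hr a hta).trans (hr b htb).symm)
      have := Int.le_of_dvd (by omega) hn'
      omega
    simp only [Reaches, hmin hb] at hr₂
    have hc : c < a + n := by
      by_contra hc
      exact hb (hh.eq_top_of_reaches (by omega) (Reaches.mono (by omega) hr₂)
        ((hh.periodic a).trans hta))
    simp only [Reaches, hta, min_eq_right le_top]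
    exact Nat.cast_le.2 (by omega)
  · have hb : h b ≠ ⊤ := fun htb =>
      hta (hh.eq_top_of_reaches hab (le_trans hr₁ (min_le_left _ _)) htb)
    simp only [Reaches, hmin hta, hmin hb] at hr₁ hr₂ ⊢
    exact hh.reaches_trans a b c hab hbc hr₁ hr₂

end raise

namespace TITO

variable {n : ℕ} {h : ℤ → ℕ∞} {a b r : ℤ} {s t u v x z : TITO n}

theorem rel_iff_not_rel (hab : a ≠ b) : t.rel a b ↔ ¬ t.rel b a :=
  ⟨fun h h' => hab (t.antisymm a b h h'), (t.total a b).resolve_right⟩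

theorem inversions_injective : Function.Injective (Inversions : TITO n → Set (ℤ × ℤ)) := by
  intro s t hst
  have hrel : ∀ a b, s.rel a b ↔ t.rel a b := by
    have hinv : ∀ a b, a < b → (s.rel b a ↔ t.rel b a) := fun a b hab => by
      simpa [Inversions, hab] using Set.ext_iff.1 hst (a, b)
    intro a b
    rcases lt_trichotomy a b with hab | rfl | hab
    · rw [rel_iff_not_rel hab.ne, rel_iff_not_rel hab.ne, hinv a b hab]
    · exact iff_of_true (s.refl a) (t.refl a)
    · exact hinv b a hab
  cases s; cases t
  congr
  funext a b
  exact propext (hrel a b)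

/-- The Dyer order. -/
instance : PartialOrder (TITO n) := PartialOrder.lift Inversions inversions_injective

theorem le_def {s t : TITO n} : s ≤ t ↔ s.Inversions ⊆ t.Inversions := Iff.rfl

def ofReach (h : ℤ → ℕ∞) (hh : IsReachFn n h) : TITO n where
  rel a b := a = b ∨ (a < b ∧ ¬ Reaches h a b) ∨ (b < a ∧ Reaches h b a)
  refl _ := Or.inl rfl
  antisymm a b := by
    rintro (rfl | ⟨hab, hr⟩ | ⟨hba, hr⟩) (h' | ⟨hba', hr'⟩ | ⟨hab', hr'⟩) <;> first
      | rfl | omega | exact absurd hr' hr | exact absurd hr hr'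
  trans a b c hab hbc := by
    rcases hab with rfl | ⟨hab, hr⟩ | ⟨hba, hr⟩
    · exact hbc
    · rcases hbc with rfl | ⟨hbc, hr'⟩ | ⟨hcb, hr'⟩
      · exact Or.inr (Or.inl ⟨hab, hr⟩)
      · exact Or.inr (Or.inl ⟨hab.trans hbc, fun hac => hr (hac.mono hbc.le)⟩)
      · rcases lt_trichotomy a c with hac | rfl | hca
        · exact Or.inr (Or.inl ⟨hac, fun hac' => hr (hh.reaches_trans a c b hac hcb hac' hr')⟩)
        · exact Or.inl rfl
        · exact Or.inr (Or.inr ⟨hca, hr'.mono hab.le⟩)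
    · rcases hbc with rfl | ⟨hbc, hr'⟩ | ⟨hcb, hr'⟩
      · exact Or.inr (Or.inr ⟨hba, hr⟩)
      · rcases lt_trichotomy a c with hac | rfl | hca
        · exact Or.inr (Or.inl ⟨hac, fun hac' => hr' (hh.reaches_trans b a c hba hac hr hac')⟩)
        · exact Or.inl rfl
        · exact absurd (hr.mono hca.le) hr'
      · exact Or.inr (Or.inr ⟨hcb.trans hba, hh.reaches_trans c b a hcb hba hr' hr⟩)
  total a b := by
    rcases lt_trichotomy a b with hab | rfl | hba
    · by_cases hr : Reaches h a b
      exacts [Or.inr (Or.inr (Or.inr ⟨hab, hr⟩)), Or.inl (Or.inr (Or.inl ⟨hab, hr⟩))]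
    · exact Or.inl (Or.inl rfl)
    · by_cases hr : Reaches h b a
      exacts [Or.inl (Or.inr (Or.inr ⟨hba, hr⟩)), Or.inr (Or.inr (Or.inl ⟨hba, hr⟩))]
  invariant a b := by
    have hshift : ∀ x y : ℤ, Reaches h (x + n) (y + n) ↔ Reaches h x y := fun x y => by
      rw [Reaches, Reaches, hh.periodic x, add_sub_add_right_eq_sub]
    simp only [hshift, add_left_inj, add_lt_add_iff_right]

theorem ofReach_rel_iff {hh : IsReachFn n h} (hab : a < b) :
    (ofReach h hh).rel b a ↔ Reaches h a b := by
  refine ⟨?_, fun hr => Or.inr (Or.inr ⟨hab, hr⟩)⟩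
  rintro (rfl | ⟨hba, -⟩ | ⟨-, hr⟩)
  exacts [absurd hab (lt_irrefl _), absurd hab hba.not_gt, hr]

theorem inversions_ofReach (hh : IsReachFn n h) :
    (ofReach h hh).Inversions = {p | p.1 < p.2 ∧ Reaches h p.1 p.2} :=
  Set.ext fun _ => and_congr_right ofReach_rel_iff

theorem avoids312_ofReach (hh : IsReachFn n h) : (ofReach h hh).Avoids312 := by
  rintro ⟨a, b, c, hab, hbc, hca, hab'⟩
  rw [ofReach_rel_iff (hab.trans hbc)] at hca
  rcases hab' with rfl | ⟨-, hr⟩ | ⟨hba, -⟩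
  exacts [lt_irrefl _ hab, hr (hca.mono hbc.le), hab.not_gt hba]

noncomputable def reach (t : TITO n) (a : ℤ) : ℕ∞ :=
  ⨆ (b : ℤ) (_ : a < b ∧ t.rel b a), ((b - a).toNat : ℕ∞)


theorem reaches_reach (hab : a < b) (hr : t.rel b a) : Reaches t.reach a b :=
  le_biSup (fun b => ((b - a).toNat : ℕ∞)) (show a < b ∧ t.rel b a from ⟨hab, hr⟩)

theorem reach_le {m : ℕ∞} (hm : ∀ b, a < b → t.rel b a → ((b - a).toNat : ℕ∞) ≤ m) :
    t.reach a ≤ m :=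
  iSup₂_le fun b hb => hm b hb.1 hb.2

theorem Avoids312.rel_of_lt (ht : t.Avoids312) {c : ℤ} (hab : a < b) (hbc : b < c)
    (hca : t.rel c a) : t.rel b a :=
  (t.total b a).resolve_right fun hab' => ht ⟨a, b, c, hab, hbc, hca, hab'⟩

theorem Avoids312.rel_iff_reaches (ht : t.Avoids312) (hab : a < b) :
    t.rel b a ↔ Reaches t.reach a b := by
  refine ⟨reaches_reach hab, fun hr => by_contra fun hba => ?_⟩
  have hle : t.reach a ≤ ((b - 1 - a).toNat : ℕ) := reach_le fun c hac hca => by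
    have hcb : c < b := by
      rcases lt_trichotomy c b with hcb | rfl | hbc
      exacts [hcb, absurd hca hba, absurd (ht.rel_of_lt hab hbc hca) hba]
    exact Nat.cast_le.2 (by omega)
  have := Nat.cast_le.1 (hr.trans hle)
  omega

theorem Avoids312.inversions_eq (ht : t.Avoids312) :
    t.Inversions = {p | p.1 < p.2 ∧ Reaches t.reach p.1 p.2} :=
  Set.ext fun _ => and_congr_right ht.rel_iff_reaches

theorem Avoids312.isReachFn (ht : t.Avoids312) : IsReachFn n t.reach := by
  refine ⟨fun a => le_antisymm (reach_le fun b hab hr => ?_) (reach_le fun b hab hr => ?_),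
    fun a b c hab hbc hr hr' => ?_⟩
  · have hr' : t.rel (b - n) a := (t.invariant (b - n) a).2 (by simpa using hr)
    have := reaches_reach (t := t) (by omega) hr'
    rwa [Reaches, show b - n - a = b - (a + n) by ring] at this
  · have := reaches_reach (by omega) ((t.invariant b a).1 hr)
    rwa [Reaches, add_sub_add_right_eq_sub] at this
  · rw [← ht.rel_iff_reaches] at hr hr' ⊢
    exacts [t.trans _ _ _ hr' hr, hab.trans hbc, hbc, hab]

theorem reach_ofReach (hh : IsReachFn n h) : (ofReach h hh).reach = h := by
  funext a
  refine le_antisymm (reach_le fun b hab hr => (ofReach_rel_iff hab).1 hr)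
    (ENat.forall_natCast_le_iff_le.1 fun m hm => ?_)
  rcases Nat.eq_zero_or_pos m with rfl | hm0
  · exact bot_le
  have := reaches_reach (t := ofReach h hh) (b := a + m) (by omega)
    ((ofReach_rel_iff (by omega)).2 (le_trans (by simp) hm))
  simpa [Reaches] using this

theorem Avoids312.ofReach_reach (ht : t.Avoids312) : ofReach t.reach ht.isReachFn = t :=
  inversions_injective (by rw [inversions_ofReach, ht.inversions_eq])

theorem le_iff_reach_le (hs : s.Avoids312) (ht : t.Avoids312) :
    s ≤ t ↔ s.reach ≤ t.reach := by
  rw [le_def, hs.inversions_eq, ht.inversions_eq]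
  constructor
  · intro hst a
    refine reach_le fun b hab hr => ?_
    have hmem : (a, b) ∈ {p : ℤ × ℤ | p.1 < p.2 ∧ Reaches s.reach p.1 p.2} :=
      ⟨hab, reaches_reach hab hr⟩
    exact (hst hmem).2
  · exact fun hst p hp => ⟨hp.1, hp.2.trans (hst _)⟩

theorem eq_of_reach_eq (hs : s.Avoids312) (ht : t.Avoids312) (hst : s.reach = t.reach) : s = t :=
  le_antisymm ((le_iff_reach_le hs ht).2 hst.le) ((le_iff_reach_le ht hs).2 hst.ge)

def HasFiniteReach (t : TITO n) : Prop := ∀ a, t.reach a ≠ ⊤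

def IsTopClass (t : TITO n) (r : ℤ) : Prop := ∀ a, t.reach a = ⊤ ↔ a ≡ r [ZMOD n]

theorem Avoids312.hasFiniteReach_of_le (hs : s.Avoids312) (ht : t.Avoids312) (hst : s ≤ t)
    (hfin : t.HasFiniteReach) : s.HasFiniteReach := fun a hsa =>
  hfin a (top_le_iff.1 (hsa ▸ (le_iff_reach_le hs ht).1 hst a))

theorem Avoids312.isTopClass_of_le (hs : s.Avoids312) (ht : t.Avoids312) (hst : s ≤ t)
    (htr : t.IsTopClass r) (hfin : ¬ s.HasFiniteReach) : s.IsTopClass r := by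
  obtain ⟨b, hb⟩ : ∃ b, s.reach b = ⊤ := by simpa [HasFiniteReach] using hfin
  have hle := (le_iff_reach_le hs ht).1 hst
  have hbr : b ≡ r [ZMOD n] := (htr b).1 (top_le_iff.1 (hb ▸ hle b))
  refine fun a => ⟨fun ha => (htr a).1 (top_le_iff.1 (ha ▸ hle a)), fun ha => ?_⟩
  rw [hs.isReachFn.eq_of_modEq (ha.trans hbr.symm), hb]

theorem mem_setOf_add_mul_iff {a x : ℤ} :
    x ∈ {x : ℤ | ∃ k : ℤ, x = a + k * n} ↔ a ≡ x [ZMOD n] := by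
  simp only [Set.mem_ofPred_eq, Int.modEq_iff_add_fac, mul_comm]

/-- A point `y` of infinite reach outside the class would sit between two elements
`x ≼ y ≼ x - n` of the class. -/
theorem Avoids312.isTopClass_of_orderConvex (ht : t.Avoids312) (hn : 1 ≤ n) {a : ℤ}
    (hconv : t.OrderConvex {x : ℤ | ∃ k : ℤ, x = a + k * n}) (ha : ¬ t.rel a (a + n)) :
    t.IsTopClass a := by
  have hh := ht.isReachFn
  have hta : t.reach a = ⊤ := hh.eq_top_of_le hn <| by
    have := (ht.rel_iff_reaches (by omega : a < a + n)).1 ((t.total _ _).resolve_left ha)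
    simpa [Reaches] using this
  refine fun y => ⟨fun hy => by_contra fun hya => ?_, fun hya => (hh.eq_of_modEq hya).trans hta⟩
  obtain ⟨x, ⟨hyx, hxy⟩, hxa⟩ := Int.exists_modEq_mem_Ioo (by omega) hya
  have hxa' : x - n ≡ a [ZMOD n] := (Int.modEq_iff_dvd.2 ⟨1, by ring⟩).trans hxa
  have hxy' : t.rel x y := (ht.rel_iff_reaches hyx).2 (.of_eq_top hy)
  have hyz : t.rel y (x - n) := (ht.rel_iff_reaches (by omega)).2
    (.of_eq_top ((hh.eq_of_modEq hxa').trans hta))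
  have hmem := hconv x (mem_setOf_add_mul_iff.2 hxa.symm) (x - n)
    (mem_setOf_add_mul_iff.2 hxa'.symm) y hxy' hyz
  exact hya (mem_setOf_add_mul_iff.1 hmem).symm

/-- A residue class of infinite reach is order-convex, and `r + n ≺ r` on it. -/
theorem Avoids312.not_isReal_of_isTopClass (ht : t.Avoids312) (hn : 1 ≤ n)
    (htr : t.IsTopClass r) : ¬ t.IsReal := by
  have hh := ht.isReachFn
  have htop : ∀ {x}, r ≡ x [ZMOD n] → t.reach x = ⊤ := fun hx => (htr _).2 hx.symm
  intro hreal
  refine (by omega : r ≠ r + n) (t.antisymm _ _ (hreal r fun x hx z _ y hxy hyz => ?_)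
    ((ht.rel_iff_reaches (by omega)).2 (.of_eq_top (htop rfl))))
  rw [mem_setOf_add_mul_iff] at hx ⊢
  by_contra hy
  rcases lt_trichotomy x y with hlt | rfl | hlt
  · exact hlt.ne (t.antisymm _ _ hxy ((ht.rel_iff_reaches hlt).2 (.of_eq_top (htop hx))))
  · exact hy hx
  · exact hy (((htr y).1 (hh.eq_top_of_reaches hlt ((ht.rel_iff_reaches hlt).1 hxy)
      (htop hx))).symm)

theorem Avoids312.not_isReal_iff (ht : t.Avoids312) (hn : 1 ≤ n) :
    ¬ t.IsReal ↔ ∃ r, t.IsTopClass r := by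
  refine ⟨fun hreal => ?_, fun ⟨r, htr⟩ => ht.not_isReal_of_isTopClass hn htr⟩
  obtain ⟨a, hconv, ha⟩ : ∃ a, t.OrderConvex {x : ℤ | ∃ k : ℤ, x = a + k * n} ∧
      ¬ t.rel a (a + n) := by simpa [IsReal] using hreal
  exact ⟨a, ht.isTopClass_of_orderConvex hn hconv ha⟩

theorem Avoids312.isReal_of_hasFiniteReach (ht : t.Avoids312) (hn : 1 ≤ n)
    (hfin : t.HasFiniteReach) : t.IsReal := by
  by_contra hreal
  obtain ⟨r, htr⟩ := (ht.not_isReal_iff hn).1 hreal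
  exact hfin r ((htr r).2 rfl)

theorem Avoids312.not_isReal_of_le (hs : s.Avoids312) (ht : t.Avoids312) (hn : 1 ≤ n)
    (hst : s ≤ t) (htr : ¬ t.IsReal) (hfin : ¬ s.HasFiniteReach) : ¬ s.IsReal := by
  obtain ⟨r, htr⟩ := (ht.not_isReal_iff hn).1 htr
  exact hs.not_isReal_of_isTopClass hn (hs.isTopClass_of_le ht hst htr hfin)

theorem isReachFn_zero : IsReachFn n (fun _ => 0) :=
  ⟨fun _ => rfl, fun a b _ hab _ hr _ => absurd (Nat.cast_le.1 hr) (by omega)⟩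

theorem isReachFn_top : IsReachFn n (fun _ => ⊤) :=
  ⟨fun _ => rfl, fun _ _ _ _ _ _ _ => le_top⟩

instance : BoundedOrder (TITO n) where
  bot := ofReach _ isReachFn_zero
  bot_le t := by
    rw [le_def, inversions_ofReach]
    exact fun p hp => absurd (Nat.cast_le.1 hp.2) (by have := hp.1; omega)
  top := ofReach _ isReachFn_top
  le_top t := by
    rw [le_def, inversions_ofReach]
    exact fun p hp => ⟨hp.1, le_top⟩

theorem reach_bot : (⊥ : TITO n).reach = fun _ => 0 := reach_ofReach _

theorem reach_top : (⊤ : TITO n).reach = fun _ => ⊤ := reach_ofReach _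

theorem avoids312_bot : (⊥ : TITO n).Avoids312 := avoids312_ofReach _

theorem avoids312_top : (⊤ : TITO n).Avoids312 := avoids312_ofReach _

theorem hasFiniteReach_bot : (⊥ : TITO n).HasFiniteReach := by simp [HasFiniteReach, reach_bot]

theorem not_hasFiniteReach_top : ¬ (⊤ : TITO n).HasFiniteReach := by
  simp [HasFiniteReach, reach_top]

theorem isReal_top (hn : 2 ≤ n) : (⊤ : TITO n).IsReal := by
  by_contra hreal
  obtain ⟨r, htr⟩ := (avoids312_top.not_isReal_iff (by omega)).1 hreal
  have h01 : (0 : ℤ) ≡ 1 [ZMOD n] :=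
    ((htr 0).1 (by rw [reach_top])).trans ((htr 1).1 (by rw [reach_top])).symm
  have := Int.le_of_dvd one_pos (Int.modEq_iff_dvd.1 h01)
  omega

open Classical in
/-- For a 312-avoiding `t`, the largest real TITO below `t`: when `t` is not real, its reach is
infinite exactly on one residue class, and there it is cut down to `n - 1`. -/
noncomputable def realify (t : TITO n) : TITO n :=
  if h : ¬ t.IsReal ∧ IsReachFn n (fun a => min (t.reach a) ((n - 1 : ℕ) : ℕ∞)) then
    ofReach _ h.2
  else t

theorem realify_of_isReal (ht : t.IsReal) : realify t = t := dif_neg fun h => h.1 ht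

theorem avoids312_realify (ht : t.Avoids312) : (realify t).Avoids312 := by
  unfold realify
  split_ifs
  exacts [avoids312_ofReach _, ht]

section realify

variable (hn : 1 ≤ n)
include hn

theorem Avoids312.reach_realify (ht : t.Avoids312) (hnr : ¬ t.IsReal) :
    (realify t).reach = fun a => min (t.reach a) ((n - 1 : ℕ) : ℕ∞) := by
  obtain ⟨r, htr⟩ := (ht.not_isReal_iff hn).1 hnr
  rw [realify, dif_pos ⟨hnr, ht.isReachFn.min_pred hn fun a => (htr a).1⟩, reach_ofReach]

theorem Avoids312.hasFiniteReach_realify (ht : t.Avoids312) (hnr : ¬ t.IsReal) :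
    (realify t).HasFiniteReach := fun a => by
  simp [ht.reach_realify hn hnr]

theorem Avoids312.isReal_realify (ht : t.Avoids312) : (realify t).IsReal := by
  by_cases hreal : t.IsReal
  · rwa [realify_of_isReal hreal]
  · exact (avoids312_realify ht).isReal_of_hasFiniteReach hn (ht.hasFiniteReach_realify hn hreal)

theorem Avoids312.realify_le (ht : t.Avoids312) : realify t ≤ t := by
  by_cases hreal : t.IsReal
  · rw [realify_of_isReal hreal]
  · rw [le_iff_reach_le (avoids312_realify ht) ht, ht.reach_realify hn hreal]
    exact fun a => min_le_left _ _

theorem Avoids312.le_realify_iff (hx : x.Avoids312) (hxr : x.IsReal) (ht : t.Avoids312) :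
    x ≤ realify t ↔ x ≤ t := by
  refine ⟨fun h => h.trans (ht.realify_le hn), fun hxt => ?_⟩
  by_cases hreal : t.IsReal
  · rwa [realify_of_isReal hreal]
  obtain ⟨r, htr⟩ := (ht.not_isReal_iff hn).1 hreal
  have hfin : x.HasFiniteReach := not_not.1 fun hfin =>
    hx.not_isReal_of_isTopClass hn (hx.isTopClass_of_le ht hxt htr hfin) hxr
  rw [le_iff_reach_le hx (avoids312_realify ht), ht.reach_realify hn hreal]
  exact fun a => le_min ((le_iff_reach_le hx ht).1 hxt a) (hx.isReachFn.le_of_ne_top hn (hfin a))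

theorem Avoids312.realify_mono (hs : s.Avoids312) (ht : t.Avoids312) (hst : s ≤ t) :
    realify s ≤ realify t :=
  ((avoids312_realify hs).le_realify_iff hn (hs.isReal_realify hn) ht).2
    ((hs.realify_le hn).trans hst)

theorem Avoids312.reach_realify_of_not_modEq (ht : t.Avoids312)
    (htr : ∀ a, a ≡ r [ZMOD n] → t.reach a = ⊤) {a : ℤ} (ha : ¬ a ≡ r [ZMOD n]) :
    (realify t).reach a = t.reach a := by
  by_cases hreal : t.IsReal
  · rw [realify_of_isReal hreal]
  obtain ⟨r', htr'⟩ := (ht.not_isReal_iff hn).1 hreal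
  have hrr' : r ≡ r' [ZMOD n] := (htr' r).1 (htr r rfl)
  have hta : t.reach a ≠ ⊤ := fun h => ha (((htr' a).1 h).trans hrr'.symm)
  rw [ht.reach_realify hn hreal]
  exact min_eq_left (ht.isReachFn.le_of_ne_top hn hta)

theorem Avoids312.reach_eq_raise (ht : t.Avoids312) (htr : t.IsTopClass r) :
    t.reach = raise n r (realify t).reach := by
  funext a
  by_cases ha : a ≡ r [ZMOD n]
  · rw [raise_of_modEq ha, (htr a).2 ha]
  · rw [raise_of_not_modEq ha, ht.reach_realify_of_not_modEq hn (fun a => (htr a).2) ha]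

theorem Avoids312.eq_of_realify_eq (hs : s.Avoids312) (ht : t.Avoids312) (hsr : ¬ s.IsReal)
    (htr : ¬ t.IsReal) (hst : s ≤ t) (heq : realify s = realify t) : s = t := by
  obtain ⟨r, htr⟩ := (ht.not_isReal_iff hn).1 htr
  have hsr : s.IsTopClass r := hs.isTopClass_of_le ht hst htr
    fun hfin => hsr (hs.isReal_of_hasFiniteReach hn hfin)
  exact eq_of_reach_eq hs ht (by rw [hs.reach_eq_raise hn hsr, ht.reach_eq_raise hn htr, heq])

theorem Avoids312.eq_or_eq_realify (hs : s.Avoids312) (ht : t.Avoids312) (hst : s ≤ t)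
    (heq : realify s = realify t) : s = t ∨ (s = realify t ∧ ¬ t.IsReal) := by
  by_cases htr : t.IsReal
  · rw [realify_of_isReal htr] at heq
    exact Or.inl (le_antisymm hst (heq ▸ hs.realify_le hn))
  by_cases hsr : s.IsReal
  · exact Or.inr ⟨(realify_of_isReal hsr).symm.trans heq, htr⟩
  · exact Or.inl (hs.eq_of_realify_eq hn ht hsr htr hst heq)

theorem exists_not_isReal_between (hu : u.Avoids312) (hv : v.Avoids312)
    (hufin : u.HasFiniteReach) (hvfin : ¬ v.HasFiniteReach) (huv : u ≤ v) :
    ∃ g : TITO n, g.Avoids312 ∧ ¬ g.IsReal ∧ u ≤ g ∧ g ≤ v := by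
  have hle := (le_iff_reach_le hu hv).1 huv
  obtain ⟨a, ha⟩ : ∃ a, v.reach a = ⊤ := by simpa [HasFiniteReach] using hvfin
  obtain ⟨r, hvr, hh⟩ := hu.isReachFn.exists_raise hv.isReachFn hn hle ⟨a, ha, hufin a⟩
  have hg := avoids312_ofReach hh
  refine ⟨ofReach _ hh, hg, hg.not_isReal_of_isTopClass (r := r) hn fun a => ?_, ?_, ?_⟩
  · rw [reach_ofReach, raise_eq_top_iff hufin]
  · rw [le_iff_reach_le hu hg, reach_ofReach]
    exact le_raise
  · rw [le_iff_reach_le hg hv, reach_ofReach]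
    intro a
    by_cases ha : a ≡ r [ZMOD n]
    · rw [raise_of_modEq ha, hv.isReachFn.eq_of_modEq ha, hvr]
    · rw [raise_of_not_modEq ha]
      exact hle a

theorem Avoids312.realify_ofReach_raise (hz : z.Avoids312) (hzr : z.IsReal)
    (hr : ((n - 1 : ℕ) : ℕ∞) ≤ z.reach r) (hh : IsReachFn n (raise n r z.reach)) :
    realify (ofReach _ hh) = z := by
  have hg := avoids312_ofReach hh
  by_cases htop : z.reach r = ⊤
  · have hraise : raise n r z.reach = z.reach := funext fun a => by
      by_cases ha : a ≡ r [ZMOD n]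
      · rw [raise_of_modEq ha, hz.isReachFn.eq_of_modEq ha, htop]
      · rw [raise_of_not_modEq ha]
    rw [eq_of_reach_eq hg hz (by rw [reach_ofReach, hraise]), realify_of_isReal hzr]
  have hzr' : z.reach r = (n - 1 : ℕ) := le_antisymm (hz.isReachFn.le_of_ne_top hn htop) hr
  have hfin : z.HasFiniteReach := fun a => by
    by_cases ha : a ≡ r [ZMOD n]
    · rwa [hz.isReachFn.eq_of_modEq ha]
    · exact hz.isReachFn.ne_top_of_eq_pred hn hzr' fun h => ha h.symm
  have hgr : ¬ (ofReach _ hh).IsReal := hg.not_isReal_of_isTopClass hn fun a => by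
    rw [reach_ofReach, raise_eq_top_iff hfin]
  refine eq_of_reach_eq (avoids312_realify hg) hz ?_
  rw [hg.reach_realify hn hgr, reach_ofReach]
  funext a
  by_cases ha : a ≡ r [ZMOD n]
  · rw [raise_of_modEq ha, hz.isReachFn.eq_of_modEq ha, hzr', min_eq_right le_top]
  · rw [raise_of_not_modEq ha]
    exact min_eq_left (hz.isReachFn.le_of_ne_top hn (hfin a))

/-- Off the class of `r`, `x` agrees with `realify x` and the raised TITO with `z`; on it both
are `⊤`. -/
theorem Avoids312.le_or_le_ofReach_raise (hx : x.Avoids312) (hz : z.Avoids312)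
    (hxr : ∀ a, a ≡ r [ZMOD n] → x.reach a = ⊤) (hh : IsReachFn n (raise n r z.reach))
    (hcmp : realify x ≤ z ∨ z ≤ realify x) : x ≤ ofReach _ hh ∨ ofReach _ hh ≤ x := by
  have hg := avoids312_ofReach hh
  have hxz := fun a (ha : ¬ a ≡ r [ZMOD n]) => hx.reach_realify_of_not_modEq hn hxr ha
  rw [le_iff_reach_le hx hg, le_iff_reach_le hg hx, reach_ofReach]
  rw [le_iff_reach_le (avoids312_realify hx) hz, le_iff_reach_le hz (avoids312_realify hx)] at hcmp
  refine hcmp.imp (fun h a => ?_) (fun h a => ?_) <;> by_cases ha : a ≡ r [ZMOD n]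
  · simp [ha]
  · rw [raise_of_not_modEq ha, ← hxz a ha]
    exact h a
  · rw [raise_of_modEq ha, hxr a ha]
  · rw [raise_of_not_modEq ha, ← hxz a ha]
    exact h a

end realify

end TITO

section ChainsIn

variable {n : ℕ} {Q C : Set (TITO n)}

theorem IsChainIn.isChain (hC : IsChainIn Q C) : IsChain (· ≤ ·) C :=
  fun x hx y hy _ => hC.2 x hx y hy

theorem isMaxChainIn_iff :
    IsMaxChainIn Q C ↔
      IsChainIn Q C ∧ ∀ z ∈ Q, (∀ x ∈ C, x ≤ z ∨ z ≤ x) → z ∈ C := by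
  refine ⟨fun hC => ⟨hC.1, fun z hz hcmp => ?_⟩,
    fun hC => ⟨hC.1, fun C' hC' hCC' => ?_⟩⟩
  · have hchain : IsChainIn Q (insert z C) := by
      refine ⟨Set.insert_subset hz hC.1.1, ?_⟩
      rintro x (rfl | hx) y (rfl | hy)
      exacts [Or.inl le_rfl, (hcmp y hy).symm, hcmp x hx, hC.1.2 x hx y hy]
    exact (hC.2 _ hchain (Set.subset_insert z C)).symm ▸ Set.mem_insert z C
  · exact hCC'.antisymm fun z hz => hC.2 z (hC'.1 hz) fun x hx => (hC'.2 z hz x (hCC' hx)).symm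

theorem IsMaxChainIn.mem_of_forall (hC : IsMaxChainIn Q C) {z : TITO n} (hz : z ∈ Q)
    (hcmp : ∀ x ∈ C, x ≤ z ∨ z ≤ x) : z ∈ C :=
  (isMaxChainIn_iff.1 hC).2 z hz hcmp

end ChainsIn

namespace TITO

variable {n : ℕ} {Q C : Set (TITO n)} {u v w x z : TITO n}

structure IsReachCut (C : Set (TITO n)) (u v : TITO n) : Prop where
  left_mem : u ∈ C
  right_mem : v ∈ C
  left_finite : u.HasFiniteReach
  right_infinite : ¬ v.HasFiniteReach
  le : u ≤ v
  le_left : ∀ x ∈ C, x.HasFiniteReach → x ≤ u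
  right_le : ∀ x ∈ C, ¬ x.HasFiniteReach → v ≤ x

theorem exists_isReachCut (hCP : ∀ x ∈ C, x.Avoids312) (hc : IsChain (· ≤ ·) C)
    (hfin : C.Finite) (hbot : ⊥ ∈ C) (htop : ⊤ ∈ C) : ∃ u v, IsReachCut C u v := by
  obtain ⟨u, ⟨huC, hu⟩, hmax⟩ :=
    (hc.mono (Set.sep_subset C HasFiniteReach)).exists_isGreatest_of_finite
      (hfin.subset (Set.sep_subset _ _)) ⟨⊥, hbot, hasFiniteReach_bot⟩
  obtain ⟨v, ⟨hvC, hv⟩, hmin⟩ :=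
    (hc.mono (Set.sep_subset C (¬ HasFiniteReach ·))).exists_isLeast_of_finite
      (hfin.subset (Set.sep_subset _ _)) ⟨⊤, htop, not_hasFiniteReach_top⟩
  have huv : u ≤ v := (hc huC hvC (fun h => hv (h ▸ hu))).resolve_right fun hvu =>
    hv ((hCP v hvC).hasFiniteReach_of_le (hCP u huC) hvu hu)
  exact ⟨u, v, huC, hvC, hu, hv, huv, fun x hx hxf => hmax ⟨hx, hxf⟩,
    fun x hx hxf => hmin ⟨hx, hxf⟩⟩

namespace IsReachCut

theorem le_or_le (hcut : IsReachCut C u v) {x : TITO n} (hx : x ∈ C) : x ≤ u ∨ v ≤ x := by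
  by_cases hxf : x.HasFiniteReach
  exacts [Or.inl (hcut.le_left x hx hxf), Or.inr (hcut.right_le x hx hxf)]

theorem mem (hcut : IsReachCut C u v) (hC : IsMaxChainIn Q C) (hw : w ∈ Q) (huw : u ≤ w)
    (hwv : w ≤ v) : w ∈ C :=
  hC.mem_of_forall hw fun _ hx =>
    (hcut.le_or_le hx).imp (fun h => h.trans huw) (fun h => hwv.trans h)

section

variable (hn : 1 ≤ n) (hcut : IsReachCut C u v)
include hn hcut

theorem realify_eq (hC : IsMaxChainIn Q C)
    (hQ : ∀ t : TITO n, t.Avoids312 → t.IsReal → t ∈ Q) (hCP : ∀ x ∈ C, x.Avoids312)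
    (hw : w.Avoids312) (hwr : ¬ w.IsReal) (huw : u ≤ w) (hwv : w ≤ v) : realify w = u := by
  have hu := hCP u hcut.left_mem
  have hur := hu.isReal_of_hasFiniteReach hn hcut.left_finite
  have hmem : realify w ∈ C := hcut.mem hC (hQ _ (avoids312_realify hw) (hw.isReal_realify hn))
    ((hu.le_realify_iff hn hur hw).2 huw) ((hw.realify_le hn).trans hwv)
  exact le_antisymm (hcut.le_left _ hmem (hw.hasFiniteReach_realify hn hwr))
    ((hu.le_realify_iff hn hur hw).2 huw)

theorem eq_of_not_isReal (hC : IsMaxChainIn Q C)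
    (hQ : ∀ t : TITO n, t.Avoids312 → t.IsReal → t ∈ Q) (hCP : ∀ x ∈ C, x.Avoids312)
    (hw : w.Avoids312) (hwr : ¬ w.IsReal) (huw : u ≤ w) (hwv : w ≤ v)
    (hz : z.Avoids312) (hzr : ¬ z.IsReal) (huz : u ≤ z) (hzv : z ≤ v)
    (hwz : w ≤ z ∨ z ≤ w) : w = z := by
  have heq : realify w = realify z :=
    (hcut.realify_eq hn hC hQ hCP hw hwr huw hwv).trans
      (hcut.realify_eq hn hC hQ hCP hz hzr huz hzv).symm
  rcases hwz with hwz | hzw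
  exacts [hw.eq_of_realify_eq hn hz hwr hzr hwz heq,
    (hz.eq_of_realify_eq hn hw hzr hwr hzw heq.symm).symm]

theorem not_isReal_right (hC : IsMaxChainIn {t : TITO n | t.Avoids312} C) : ¬ v.IsReal := by
  intro hvr
  have hv : v.Avoids312 := hC.1.1 hcut.right_mem
  obtain ⟨g, hg, hgr, hug, hgv⟩ := exists_not_isReal_between hn (hC.1.1 hcut.left_mem) hv
    hcut.left_finite hcut.right_infinite hcut.le
  have hgC : g ∈ C := hcut.mem hC hg hug hgv
  have hgfin : ¬ g.HasFiniteReach := fun hfin => hgr (hg.isReal_of_hasFiniteReach hn hfin)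
  exact hv.not_isReal_of_le hg hn (hcut.right_le g hgC hgfin) hgr hcut.right_infinite hvr

theorem ncard_realify_image (hCP : ∀ x ∈ C, x.Avoids312) (hc : IsChain (· ≤ ·) C)
    (hfin : C.Finite) (hvr : ¬ v.IsReal) (hvu : realify v = u) :
    (realify '' C).ncard + 1 = C.ncard := by
  have hv := hCP v hcut.right_mem
  have hinj :
      ∀ x ∈ C \ {v}, ∀ y ∈ C \ {v}, x ≤ y → realify x = realify y → x = y := by
    rintro x ⟨hx, -⟩ y ⟨hy, hyv⟩ hxy heq
    refine ((hCP x hx).eq_or_eq_realify hn (hCP y hy) hxy heq).resolve_right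
      fun ⟨hxy', hyr⟩ => hyv ?_
    have hvy : v ≤ y :=
      hcut.right_le y hy fun hf => hyr ((hCP y hy).isReal_of_hasFiniteReach hn hf)
    have hxu : x ≤ u := hcut.le_left x hx <| by
      rw [hxy']
      exact (hCP y hy).hasFiniteReach_realify hn hyr
    have hyv' : realify y = realify v :=
      le_antisymm (hxy'.symm.le.trans (hxu.trans hvu.symm.le)) (hv.realify_mono hn (hCP y hy) hvy)
    exact (hv.eq_of_realify_eq hn (hCP y hy) hvr hyr hvy hyv'.symm).symm
  have hinjOn : Set.InjOn realify (C \ {v}) := fun x hx y hy heq => by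
    rcases eq_or_ne x y with hxy | hxy
    · exact hxy
    rcases hc hx.1 hy.1 hxy with h | h
    exacts [hinj x hx y hy h heq, (hinj y hy x hx h heq.symm).symm]
  have huv : u ≠ v := fun h => hcut.right_infinite (h ▸ hcut.left_finite)
  have hu := realify_of_isReal ((hCP u hcut.left_mem).isReal_of_hasFiniteReach hn hcut.left_finite)
  have himage : realify '' C = realify '' (C \ {v}) := by
    refine (Set.image_mono Set.sdiff_subset).antisymm' ?_
    rintro _ ⟨x, hx, rfl⟩
    by_cases hxv : x = v
    · exact ⟨u, ⟨hcut.left_mem, huv⟩, hxv ▸ hu.trans hvu.symm⟩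
    · exact ⟨x, ⟨hx, hxv⟩, rfl⟩
  rw [himage, hinjOn.ncard_image, Set.ncard_sdiff_singleton_add_one hcut.right_mem hfin]

theorem exists_lift (hCP : ∀ x ∈ C, x.Avoids312) (hvr : ¬ v.IsReal) (hvu : realify v = u)
    (hz : z.Avoids312) (hzr : z.IsReal) (hcmp : ∀ x ∈ C, realify x ≤ z ∨ z ≤ realify x) :
    ∃ z', z'.Avoids312 ∧ realify z' = z ∧ ∀ x ∈ C, x ≤ z' ∨ z' ≤ x := by
  have hu := hCP u hcut.left_mem
  have hv := hCP v hcut.right_mem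
  obtain ⟨r, hvtop⟩ := (hv.not_isReal_iff hn).1 hvr
  have hcmpu := hcmp u hcut.left_mem
  rw [realify_of_isReal (hu.isReal_of_hasFiniteReach hn hcut.left_finite)] at hcmpu
  rcases hcmpu with huz | hzu
  · have hr : ((n - 1 : ℕ) : ℕ∞) ≤ z.reach r := by
      have := (le_iff_reach_le hu hz).1 huz r
      rw [← hvu, hv.reach_realify hn hvr] at this
      simpa [(hvtop r).2 rfl] using this
    have hh := hz.isReachFn.raise_of_le hn hr
    have hg := avoids312_ofReach hh
    refine ⟨ofReach _ hh, hg, hz.realify_ofReach_raise hn hzr hr hh, fun x hx => ?_⟩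
    by_cases hxf : x.HasFiniteReach
    · refine Or.inl (((hcut.le_left x hx hxf).trans huz).trans ?_)
      rw [le_iff_reach_le hz hg, reach_ofReach]
      exact le_raise
    · have hxr : ∀ a, a ≡ r [ZMOD n] → x.reach a = ⊤ := fun a ha => top_le_iff.1
        ((hvtop a).2 ha ▸ (le_iff_reach_le hv (hCP x hx)).1 (hcut.right_le x hx hxf) a)
      exact (hCP x hx).le_or_le_ofReach_raise hn hz hxr hh (hcmp x hx)
  · refine ⟨z, hz, realify_of_isReal hzr, fun x hx => ?_⟩
    by_cases hxf : x.HasFiniteReach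
    · exact realify_of_isReal ((hCP x hx).isReal_of_hasFiniteReach hn hxf) ▸ hcmp x hx
    · exact Or.inr (hzu.trans (hcut.le.trans (hcut.right_le x hx hxf)))

theorem isMaxChainIn_realify_image (hC : IsMaxChainIn {t : TITO n | t.Avoids312} C)
    (hvr : ¬ v.IsReal) (hvu : realify v = u) :
    IsMaxChainIn {t : TITO n | t.Avoids312 ∧ t.IsReal} (realify '' C) := by
  have hCP : ∀ x ∈ C, x.Avoids312 := fun x hx => hC.1.1 hx
  refine isMaxChainIn_iff.2 ⟨⟨?_, ?_⟩, fun z ⟨hz, hzr⟩ hcmp => ?_⟩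
  · rintro _ ⟨x, hx, rfl⟩
    exact ⟨avoids312_realify (hCP x hx), (hCP x hx).isReal_realify hn⟩
  · rintro _ ⟨x, hx, rfl⟩ _ ⟨y, hy, rfl⟩
    exact (hC.1.2 x hx y hy).imp ((hCP x hx).realify_mono hn (hCP y hy))
      ((hCP y hy).realify_mono hn (hCP x hx))
  obtain ⟨z', hz', rfl, hz'C⟩ := hcut.exists_lift hn hCP hvr hvu hz hzr fun x hx =>
    hcmp _ (Set.mem_image_of_mem realify hx)
  exact ⟨z', hC.mem_of_forall hz' hz'C, rfl⟩

end

end IsReachCut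

end TITO

section Directions

open TITO

variable {n : ℕ} {C : Set (TITO n)}

theorem IsMaxChainIn.exists_insert_of_real (hn : 2 ≤ n)
    (hC : IsMaxChainIn {t : TITO n | t.Avoids312 ∧ t.IsReal} C) (hfin : C.Finite) :
    ∃ g ∉ C, IsMaxChainIn {t : TITO n | t.Avoids312} (insert g C) := by
  have hn1 : 1 ≤ n := by omega
  have hCP : ∀ x ∈ C, x.Avoids312 := fun x hx => (hC.1.1 hx).1
  obtain ⟨u, v, hcut⟩ := exists_isReachCut hCP hC.1.isChain hfin
    (hC.mem_of_forall ⟨avoids312_bot, avoids312_bot.isReal_of_hasFiniteReach hn1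
      hasFiniteReach_bot⟩ fun _ _ => Or.inr bot_le)
    (hC.mem_of_forall ⟨avoids312_top, isReal_top hn⟩ fun _ _ => Or.inl le_top)
  have hu := hCP u hcut.left_mem
  have hv := hCP v hcut.right_mem
  obtain ⟨g, hg, hgr, hug, hgv⟩ := exists_not_isReal_between hn1 hu hv hcut.left_finite
    hcut.right_infinite hcut.le
  refine ⟨g, fun hgC => hgr (hC.1.1 hgC).2,
    isMaxChainIn_iff.2 ⟨⟨Set.insert_subset hg hCP, ?_⟩, fun z hz hcmp => ?_⟩⟩
  · have hgcmp : ∀ x ∈ C, x ≤ g ∨ g ≤ x := fun x hx =>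
      (hcut.le_or_le hx).imp (·.trans hug) hgv.trans
    rintro x (rfl | hx) y (rfl | hy)
    exacts [Or.inl le_rfl, (hgcmp y hy).symm, hgcmp x hx, hC.1.2 x hx y hy]
  by_cases hzr : z.IsReal
  · exact Set.mem_insert_of_mem g
      (hC.mem_of_forall ⟨hz, hzr⟩ fun x hx => hcmp x (Set.mem_insert_of_mem g hx))
  have huz : u ≤ z := (hcmp u (Set.mem_insert_of_mem g hcut.left_mem)).resolve_right
    fun hzu => hzr <|
      hz.isReal_of_hasFiniteReach hn1 (hz.hasFiniteReach_of_le hu hzu hcut.left_finite)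
  have hzv : z ≤ v := (hcmp v (Set.mem_insert_of_mem g hcut.right_mem)).resolve_left
    fun hvz => hv.not_isReal_of_le hz hn1 hvz hzr hcut.right_infinite (hC.1.1 hcut.right_mem).2
  exact Set.mem_insert_iff.2 <| Or.inl <|
    hcut.eq_of_not_isReal hn1 hC (fun t ht htr => ⟨ht, htr⟩) hCP hz hzr huz hzv hg hgr hug hgv
      (hcmp g (Set.mem_insert g C)).symm

theorem IsMaxChainIn.exists_real_of_avoids312 (hn : 2 ≤ n)
    (hC : IsMaxChainIn {t : TITO n | t.Avoids312} C) (hfin : C.Finite) :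
    ∃ C', IsMaxChainIn {t : TITO n | t.Avoids312 ∧ t.IsReal} C' ∧ C'.ncard + 1 = C.ncard := by
  have hn1 : 1 ≤ n := by omega
  have hCP : ∀ x ∈ C, x.Avoids312 := fun x hx => hC.1.1 hx
  obtain ⟨u, v, hcut⟩ := exists_isReachCut hCP hC.1.isChain hfin
    (hC.mem_of_forall avoids312_bot fun _ _ => Or.inr bot_le)
    (hC.mem_of_forall avoids312_top fun _ _ => Or.inl le_top)
  have hvr := hcut.not_isReal_right hn1 hC
  have hvu :=
    hcut.realify_eq hn1 hC (fun t ht _ => ht) hCP (hCP v hcut.right_mem) hvr hcut.le le_rfl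
  exact ⟨_, hcut.isMaxChainIn_realify_image hn1 hC hvr hvu,
    hcut.ncard_realify_image hn1 hCP hC.1.isChain hfin hvr hvu⟩

end Directions

theorem stmt17 (n : ℕ) (hn : 2 ≤ n) (k : ℕ) :
    (∃ C : Set (TITO n),
        IsMaxChainIn {t : TITO n | t.Avoids312 ∧ t.IsReal} C ∧ C.ncard = k + 1) ↔
    (∃ C : Set (TITO n),
        IsMaxChainIn {t : TITO n | t.Avoids312} C ∧ C.ncard = k + 2) := by
  constructor
  · rintro ⟨C, hC, hcard⟩
    have hfin : C.Finite := Set.finite_of_ncard_ne_zero (by omega)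
    obtain ⟨g, hgC, hC'⟩ := hC.exists_insert_of_real hn hfin
    exact ⟨insert g C, hC', by rw [Set.ncard_insert_of_notMem hgC hfin, hcard]⟩
  · rintro ⟨C, hC, hcard⟩
    have hfin : C.Finite := Set.finite_of_ncard_ne_zero (by omega)
    obtain ⟨C', hC', hcard'⟩ := hC.exists_real_of_avoids312 hn hfin
    exact ⟨C', hC', by omega⟩
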